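/- arXiv:2011.12726 — 2 statements merged into one kernel-verified Lean document; each statement's English description precedes it below -/
import Mathlib

section
/- Let A₁ ∈ ℝ^{n×n}, B₁ ∈ ℝ^{n×m₁}, C₁ ∈ ℝ^{l₁×n}, D₁ ∈ ℝ^{l₁×m₁}, A₂ ∈ ℝ^{n×n}, B₂ ∈ ℝ^{n×m₂}, C₂ ∈ ℝ^{l₂×n}, D₂ ∈ ℝ^{l₂×m₂}, and γ > 0. Suppose there exist symmetric matrices P ∈ ℝ^{n×n}, Q₁ ∈ ℝ^{m₁×m₁}, Q₂ ∈ ℝ^{m₂×m₂} such that L(A₁,B₁,C₁,D₁,P,Q₁,γ) ≺ 0 and L(A₂,B₂,C₂,D₂,P,Q₂,γ) ≺ 0. Then L(𝒜, ℬ, 𝒞, 𝒟, P, 𝒬, γ) ≺ 0, where 𝒜 := A₂A₁, ℬ := [A₂B₁, B₂], 𝒞 := [C₁; C₂A₁], 𝒟 := [[D₁, 0],[C₂B₁, D₂]], and 𝒬 := diag(Q₁, Q₂). -/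
open Matrix

noncomputable section

/-- A symmetric matrix is copositive if its quadratic form is nonnegative on the
nonnegative orthant. -/
def Copositive {q : Type*} [Fintype q] (Q : Matrix q q ℝ) : Prop :=
  Q.IsSymm ∧ ∀ x : q → ℝ, (∀ i, 0 ≤ x i) → 0 ≤ x ⬝ᵥ Q.mulVec x

/-- The matrix L(A,B,C,D,P,Q,γ). -/
def Lmat {n w z : Type*} [Fintype n] [Fintype w] [Fintype z]
    [DecidableEq n] [DecidableEq w] [DecidableEq z]
    (A : Matrix n n ℝ) (B : Matrix n w ℝ) (C : Matrix z n ℝ) (D : Matrix z w ℝ)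
    (P : Matrix n n ℝ) (Q : Matrix w w ℝ) (γ : ℝ) : Matrix (n ⊕ w) (n ⊕ w) ℝ :=
  Matrix.fromBlocks (-P) 0 0 ((-(γ ^ 2)) • (1 : Matrix w w ℝ) + Q)
    + (Matrix.fromBlocks A B C D)ᵀ * Matrix.fromBlocks P 0 0 (1 : Matrix z z ℝ)
      * Matrix.fromBlocks A B C D

/-- State of the LTI system x(k+1) = A x(k) + B w(k), x(0) = 0. -/
def ltiState {n w : Type*} [Fintype n] [Fintype w]
    (A : Matrix n n ℝ) (B : Matrix n w ℝ) (ws : ℕ → w → ℝ) : ℕ → n → ℝ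
  | 0 => 0
  | k + 1 => A.mulVec (ltiState A B ws k) + B.mulVec (ws k)

/-- Output z(k) = C x(k) + D w(k). -/
def ltiOutput {n w z : Type*} [Fintype n] [Fintype w] [Fintype z]
    (A : Matrix n n ℝ) (B : Matrix n w ℝ) (C : Matrix z n ℝ) (D : Matrix z w ℝ)
    (ws : ℕ → w → ℝ) (k : ℕ) : z → ℝ :=
  C.mulVec (ltiState A B ws k) + D.mulVec (ws k)

/-- l2 norm of a discrete-time signal. -/
def sigNorm {w : Type*} [Fintype w] (u : ℕ → w → ℝ) : ℝ :=
  Real.sqrt (∑' k, ∑ i, (u k i) ^ 2)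

/-- Euclidean norm of a vector. -/
def vecNorm {ι : Type*} [Fintype ι] (v : ι → ℝ) : ℝ :=
  Real.sqrt (∑ i, (v i) ^ 2)

/-- The positive l2 induced norm of the system (A,B,C,D). -/
def posL2Gain {n w z : Type*} [Fintype n] [Fintype w] [Fintype z]
    (A : Matrix n n ℝ) (B : Matrix n w ℝ) (C : Matrix z n ℝ) (D : Matrix z w ℝ) : ℝ :=
  sSup {c : ℝ | ∃ ws : ℕ → w → ℝ, (∀ k i, 0 ≤ ws k i) ∧
    Summable (fun k => ∑ i, (ws k i) ^ 2) ∧ sigNorm ws = 1 ∧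
    c = sigNorm (ltiOutput A B C D ws)}

/-- The l2 induced norm of the system (A,B,C,D). -/
def l2Gain {n w z : Type*} [Fintype n] [Fintype w] [Fintype z]
    (A : Matrix n n ℝ) (B : Matrix n w ℝ) (C : Matrix z n ℝ) (D : Matrix z w ℝ) : ℝ :=
  sSup {c : ℝ | ∃ ws : ℕ → w → ℝ,
    Summable (fun k => ∑ i, (ws k i) ^ 2) ∧ sigNorm ws = 1 ∧
    c = sigNorm (ltiOutput A B C D ws)}

/-- Schur–Cohn stability: the spectral radius (over ℂ) is < 1. -/
def SchurStable {n : Type*} [Fintype n] [DecidableEq n] (A : Matrix n n ℝ) : Prop :=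
  spectralRadius ℂ (A.map (algebraMap ℝ ℂ)) < 1

/-- Lifted A matrix. -/
def liftA {n : Type*} [Fintype n] [DecidableEq n] (A : Matrix n n ℝ) (N : ℕ) :
    Matrix n n ℝ := A ^ N

/-- Lifted B matrix. -/
def liftB {n w : Type*} [Fintype n] [DecidableEq n]
    (A : Matrix n n ℝ) (B : Matrix n w ℝ) (N : ℕ) : Matrix n (Fin N × w) ℝ :=
  Matrix.of fun r c => (A ^ (N - 1 - (c.1 : ℕ)) * B) r c.2

/-- Lifted C matrix. -/
def liftC {n z : Type*} [Fintype n] [DecidableEq n]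
    (A : Matrix n n ℝ) (C : Matrix z n ℝ) (N : ℕ) : Matrix (Fin N × z) n ℝ :=
  Matrix.of fun r c => (C * A ^ (r.1 : ℕ)) r.2 c

/-- Lifted D matrix. -/
def liftD {n w z : Type*} [Fintype n] [DecidableEq n]
    (A : Matrix n n ℝ) (B : Matrix n w ℝ) (C : Matrix z n ℝ) (D : Matrix z w ℝ)
    (N : ℕ) : Matrix (Fin N × z) (Fin N × w) ℝ :=
  Matrix.of fun r c =>
    if (r.1 : ℕ) = (c.1 : ℕ) then D r.2 c.2
    else if (c.1 : ℕ) < (r.1 : ℕ) then (C * A ^ ((r.1 : ℕ) - (c.1 : ℕ) - 1) * B) r.2 c.2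
    else 0

/-- ReLU. -/
def relu {ι : Type*} (ξ : ι → ℝ) : ι → ℝ := fun i => max (ξ i) 0

/-- Positive maximal singular value. -/
def matPosNorm {ι κ : Type*} [Fintype ι] [Fintype κ] (M : Matrix ι κ ℝ) : ℝ :=
  sSup {c : ℝ | ∃ v : κ → ℝ, (∀ i, 0 ≤ v i) ∧ vecNorm v = 1 ∧ c = vecNorm (M.mulVec v)}

/-- Maximal singular value (spectral norm). -/
def matNorm {ι κ : Type*} [Fintype ι] [Fintype κ] (M : Matrix ι κ ℝ) : ℝ :=
  sSup {c : ℝ | ∃ v : κ → ℝ, vecNorm v = 1 ∧ c = vecNorm (M.mulVec v)}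


/-!
The quadratic form of `L` for the cascade at `(x, w₁, w₂)` is the form of `L₁` at `(x, w₁)` plus
the form of `L₂` at `(A₁ x + B₁ w₁, w₂)`: the storage terms `x₁ᵀ P x₁` of the intermediate state
`x₁ = A₁ x + B₁ w₁` cancel. At the level of matrices, `L = Tᵀ diag(L₁, L₂) T` for the injective
map `T (x, w₁, w₂) = ((x, w₁), (x₁, w₂))`, so `-L` is positive definite by congruence.
-/

theorem Sum.exists_elim_eq {α β γ : Type*} (u : α ⊕ β → γ) : ∃ f g, Sum.elim f g = u :=
  ⟨_, _, Sum.elim_comp_inl_inr u⟩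

namespace Matrix

theorem PosDef.fromBlocks_zero {R m n : Type*} [Fintype m] [Fintype n] [Ring R] [PartialOrder R]
    [StarRing R] [AddLeftMono R] {A : Matrix m m R} {D : Matrix n n R} (hA : A.PosDef)
    (hD : D.PosDef) : (fromBlocks A 0 0 D).PosDef := by
  refine .of_dotProduct_mulVec_pos (hA.isHermitian.fromBlocks (by simp) hD.isHermitian)
    fun u hu => ?_
  obtain ⟨x, v, rfl⟩ := Sum.exists_elim_eq u
  simp only [fromBlocks_mulVec, zero_mulVec, add_zero, zero_add, Sum.elim_comp_inl,
    Sum.elim_comp_inr, Function.star_sumElim, sumElim_dotProduct_sumElim]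
  rcases eq_or_ne x 0 with rfl | hx
  · simpa using hD.dotProduct_mulVec_pos (by rintro rfl; exact hu Sum.elim_zero_zero)
  · exact add_pos_of_pos_of_nonneg (hA.dotProduct_mulVec_pos hx)
      (hD.posSemidef.dotProduct_mulVec_nonneg v)

theorem dotProduct_transpose_mul_mul_mulVec {R m n : Type*} [Fintype m] [Fintype n]
    [CommSemiring R] (T : Matrix m n R) (M : Matrix m m R) (u v : n → R) :
    u ⬝ᵥ (Tᵀ * M * T) *ᵥ v = (T *ᵥ u) ⬝ᵥ M *ᵥ (T *ᵥ v) := by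
  rw [← mulVec_mulVec, ← mulVec_mulVec, dotProduct_mulVec, vecMul_transpose]

theorem ext_dotProduct_mulVec {R m n : Type*} [Fintype m] [Fintype n] [DecidableEq m]
    [DecidableEq n] [CommSemiring R] {M N : Matrix m n R}
    (h : ∀ u v, u ⬝ᵥ M *ᵥ v = u ⬝ᵥ N *ᵥ v) : M = N := by
  ext i j
  simpa using h (Pi.single i 1) (Pi.single j 1)

end Matrix

section Cascade

variable {n w w₁ w₂ z z₁ z₂ : Type*} [Fintype n] [Fintype w] [Fintype w₁] [Fintype w₂]
  [Fintype z] [Fintype z₁] [Fintype z₂] [DecidableEq n] [DecidableEq w] [DecidableEq w₁]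
  [DecidableEq w₂] [DecidableEq z] [DecidableEq z₁] [DecidableEq z₂]

theorem sumElim_dotProduct_Lmat_mulVec_sumElim (A : Matrix n n ℝ) (B : Matrix n w ℝ)
    (C : Matrix z n ℝ) (D : Matrix z w ℝ) (P : Matrix n n ℝ) (Q : Matrix w w ℝ) (γ : ℝ)
    (x x' : n → ℝ) (v v' : w → ℝ) :
    Sum.elim x v ⬝ᵥ Lmat A B C D P Q γ *ᵥ Sum.elim x' v' =
      -(x ⬝ᵥ P *ᵥ x') - γ ^ 2 * (v ⬝ᵥ v') + v ⬝ᵥ Q *ᵥ v'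
      + (A *ᵥ x + B *ᵥ v) ⬝ᵥ P *ᵥ (A *ᵥ x' + B *ᵥ v')
      + (C *ᵥ x + D *ᵥ v) ⬝ᵥ (C *ᵥ x' + D *ᵥ v') := by
  simp only [Lmat, dotProduct_transpose_mul_mul_mulVec, fromBlocks_mulVec, Sum.elim_comp_inl,
    Sum.elim_comp_inr, zero_mulVec, add_zero, zero_add, add_mulVec, neg_mulVec, smul_mulVec,
    one_mulVec, neg_smul, sumElim_dotProduct_sumElim, dotProduct_neg, dotProduct_add,
    add_dotProduct, dotProduct_smul, smul_eq_mul]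
  ring

def cascadeIn (A₁ : Matrix n n ℝ) (B₁ : Matrix n w₁ ℝ) :
    Matrix ((n ⊕ w₁) ⊕ (n ⊕ w₂)) (n ⊕ (w₁ ⊕ w₂)) ℝ :=
  fromRows (fromBlocks 1 0 0 (fromCols 1 0)) (fromBlocks A₁ (fromCols B₁ 0) 0 (fromCols 0 1))

@[simp]
theorem cascadeIn_mulVec (A₁ : Matrix n n ℝ) (B₁ : Matrix n w₁ ℝ) (x : n → ℝ) (v₁ : w₁ → ℝ)
    (v₂ : w₂ → ℝ) :
    cascadeIn A₁ B₁ *ᵥ Sum.elim x (Sum.elim v₁ v₂) =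
      Sum.elim (Sum.elim x v₁) (Sum.elim (A₁ *ᵥ x + B₁ *ᵥ v₁) v₂) := by
  simp [cascadeIn, fromBlocks_mulVec]

theorem cascadeIn_mulVec_injective (A₁ : Matrix n n ℝ) (B₁ : Matrix n w₁ ℝ) :
    Function.Injective (cascadeIn (w₂ := w₂) A₁ B₁).mulVec := by
  intro u u' h
  obtain ⟨x, v, rfl⟩ := Sum.exists_elim_eq u
  obtain ⟨v₁, v₂, rfl⟩ := Sum.exists_elim_eq v
  obtain ⟨x', v', rfl⟩ := Sum.exists_elim_eq u'
  obtain ⟨v₁', v₂', rfl⟩ := Sum.exists_elim_eq v'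
  simp only [cascadeIn_mulVec, Sum.elim_eq_iff] at h
  obtain ⟨⟨rfl, rfl⟩, -, rfl⟩ := h
  rfl

theorem Lmat_cascade (A₁ : Matrix n n ℝ) (B₁ : Matrix n w₁ ℝ) (C₁ : Matrix z₁ n ℝ)
    (D₁ : Matrix z₁ w₁ ℝ) (A₂ : Matrix n n ℝ) (B₂ : Matrix n w₂ ℝ) (C₂ : Matrix z₂ n ℝ)
    (D₂ : Matrix z₂ w₂ ℝ) (P : Matrix n n ℝ) (Q₁ : Matrix w₁ w₁ ℝ) (Q₂ : Matrix w₂ w₂ ℝ)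
    (γ : ℝ) :
    Lmat (A₂ * A₁) (fromCols (A₂ * B₁) B₂) (fromRows C₁ (C₂ * A₁))
        (fromBlocks D₁ 0 (C₂ * B₁) D₂) P (fromBlocks Q₁ 0 0 Q₂) γ =
      (cascadeIn (w₂ := w₂) A₁ B₁)ᵀ *
        fromBlocks (Lmat A₁ B₁ C₁ D₁ P Q₁ γ) 0 0 (Lmat A₂ B₂ C₂ D₂ P Q₂ γ) *
          cascadeIn (w₂ := w₂) A₁ B₁ := by
  refine ext_dotProduct_mulVec fun u u' => ?_
  obtain ⟨x, v, rfl⟩ := Sum.exists_elim_eq u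
  obtain ⟨v₁, v₂, rfl⟩ := Sum.exists_elim_eq v
  obtain ⟨x', v', rfl⟩ := Sum.exists_elim_eq u'
  obtain ⟨v₁', v₂', rfl⟩ := Sum.exists_elim_eq v'
  rw [dotProduct_transpose_mul_mul_mulVec, cascadeIn_mulVec, cascadeIn_mulVec]
  simp only [fromBlocks_mulVec, fromCols_mulVec_sumElim, fromRows_mulVec,
    sumElim_dotProduct_Lmat_mulVec_sumElim, sumElim_dotProduct_sumElim, ← mulVec_mulVec,
    mulVec_add, dotProduct_add, add_dotProduct, zero_mulVec, add_zero, zero_add,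
    Sum.elim_comp_inl, Sum.elim_comp_inr]
  ring

end Cascade

theorem stmt_3_general (n m₁ m₂ l₁ l₂ : ℕ)
    (A₁ : Matrix (Fin n) (Fin n) ℝ) (B₁ : Matrix (Fin n) (Fin m₁) ℝ)
    (C₁ : Matrix (Fin l₁) (Fin n) ℝ) (D₁ : Matrix (Fin l₁) (Fin m₁) ℝ)
    (A₂ : Matrix (Fin n) (Fin n) ℝ) (B₂ : Matrix (Fin n) (Fin m₂) ℝ)
    (C₂ : Matrix (Fin l₂) (Fin n) ℝ) (D₂ : Matrix (Fin l₂) (Fin m₂) ℝ)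
    (γ : ℝ) (P : Matrix (Fin n) (Fin n) ℝ)
    (Q₁ : Matrix (Fin m₁) (Fin m₁) ℝ) (Q₂ : Matrix (Fin m₂) (Fin m₂) ℝ)
    (h₁ : (-(Lmat A₁ B₁ C₁ D₁ P Q₁ γ)).PosDef)
    (h₂ : (-(Lmat A₂ B₂ C₂ D₂ P Q₂ γ)).PosDef) :
    (-(Lmat (A₂ * A₁) (Matrix.fromCols (A₂ * B₁) B₂)
        (Matrix.fromRows C₁ (C₂ * A₁)) (Matrix.fromBlocks D₁ 0 (C₂ * B₁) D₂)
        P (Matrix.fromBlocks Q₁ 0 0 Q₂) γ)).PosDef := by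
  rw [Lmat_cascade, ← Matrix.neg_mul, ← Matrix.mul_neg, fromBlocks_neg, neg_zero, neg_zero]
  have h := (h₁.fromBlocks_zero h₂).conjTranspose_mul_mul_same (cascadeIn_mulVec_injective A₁ B₁)
  rwa [conjTranspose_eq_transpose_of_trivial] at h

/-- if L(A₁,B₁,C₁,D₁,P,Q₁,γ) ≺ 0 and L(A₂,B₂,C₂,D₂,P,Q₂,γ) ≺ 0, then
the composed system satisfies L(𝒜,ℬ,𝒞,𝒟,P,diag(Q₁,Q₂),γ) ≺ 0. -/
theorem stmt_3 (n m₁ m₂ l₁ l₂ : ℕ)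
    (A₁ : Matrix (Fin n) (Fin n) ℝ) (B₁ : Matrix (Fin n) (Fin m₁) ℝ)
    (C₁ : Matrix (Fin l₁) (Fin n) ℝ) (D₁ : Matrix (Fin l₁) (Fin m₁) ℝ)
    (A₂ : Matrix (Fin n) (Fin n) ℝ) (B₂ : Matrix (Fin n) (Fin m₂) ℝ)
    (C₂ : Matrix (Fin l₂) (Fin n) ℝ) (D₂ : Matrix (Fin l₂) (Fin m₂) ℝ)
    (γ : ℝ) (P : Matrix (Fin n) (Fin n) ℝ)
    (Q₁ : Matrix (Fin m₁) (Fin m₁) ℝ) (Q₂ : Matrix (Fin m₂) (Fin m₂) ℝ)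
    (hγ : 0 < γ) (hP : P.IsSymm) (hQ₁ : Q₁.IsSymm) (hQ₂ : Q₂.IsSymm)
    (h₁ : (-(Lmat A₁ B₁ C₁ D₁ P Q₁ γ)).PosDef)
    (h₂ : (-(Lmat A₂ B₂ C₂ D₂ P Q₂ γ)).PosDef) :
    (-(Lmat (A₂ * A₁) (Matrix.fromCols (A₂ * B₁) B₂)
        (Matrix.fromRows C₁ (C₂ * A₁)) (Matrix.fromBlocks D₁ 0 (C₂ * B₁) D₂)
        P (Matrix.fromBlocks Q₁ 0 0 Q₂) γ)).PosDef :=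
  stmt_3_general n m₁ m₂ l₁ l₂ A₁ B₁ C₁ D₁ A₂ B₂ C₂ D₂ γ P Q₁ Q₂ h₁ h₂

end
end

section
/- Consider the RNN x(0) = 0, x(k+1) = Λ x(k) + W_in w(k) + v(k), z(k) = W_out x(k), w(k) = Φ(z(k) + s(k)), where Λ ∈ ℝ^{n×n} is Schur–Cohn stable, W_in ∈ ℝ^{n×m}, W_out ∈ ℝ^{m×n}, Φ is the ReLU, and s : ℕ → ℝ^m, v : ℕ → ℝ^n are external inputs. Let G₀ denote the discrete-time LTI system with matrices (Λ, W_in, W_out, 0). If ‖G₀‖_{2+} < 1, then the RNN is finite-gain l2 stable: there exists γ ≥ 0 such that for all inputs s, v and all τ ∈ ℕ, ‖z_τ‖_2² + ‖w_τ‖_2² ≤ γ² (‖s_τ‖_2² + ‖v_τ‖_2²). -/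
open Matrix

noncomputable section

/-- State of the RNN x(k+1) = Λ x(k) + W_in Φ(W_out x(k) + s(k)) + v(k), x(0) = 0,
where Φ is the ReLU. -/
def rnnState {n m : ℕ} (Λ : Matrix (Fin n) (Fin n) ℝ) (Win : Matrix (Fin n) (Fin m) ℝ)
    (Wout : Matrix (Fin m) (Fin n) ℝ) (s : ℕ → Fin m → ℝ) (v : ℕ → Fin n → ℝ) :
    ℕ → Fin n → ℝ
  | 0 => 0
  | k + 1 =>
      Λ.mulVec (rnnState Λ Win Wout s v k)
        + Win.mulVec (relu (Wout.mulVec (rnnState Λ Win Wout s v k) + s k)) + v k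

/-- Squared l2 norm of the truncation of a signal up to time instant τ. -/
def trNormSq {ι : Type*} [Fintype ι] (u : ℕ → ι → ℝ) (τ : ℕ) : ℝ :=
  ∑ k ∈ Finset.range (τ + 1), ∑ i, (u k i) ^ 2

/-!
By superposition the RNN output is `z = G₀ w + G₁ v`, where `G₁ = (Λ, 1, W_out, 0)`. Schur–Cohn
stability makes `∑ ‖Λ ^ j‖` finite (Gelfand's formula), so Young's inequality for the convolution
`z(k) = ∑ⱼ C Λ ^ j B u(k - j - 1)` bounds every such system on every window `0, …, τ`. In particular
the supremum defining `‖G₀‖_{2+}` is a genuine one, and by causality and homogeneity it bounds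
`‖(G₀ w)_τ‖ ≤ ‖G₀‖_{2+} ‖w_τ‖` for the nonnegative signal `w = Φ(z + s)`. As `|Φ ξ| ≤ |ξ|`,
`‖w_τ‖ ≤ ‖z_τ‖ + ‖s_τ‖`, and the loop closes because `‖G₀‖_{2+} < 1`.
-/

section TruncatedNorm

open Finset

variable {ι : Type*}

variable (ι) in
/-- Realising the window `0, …, τ` of a signal in `ℓ²` gives `truncNorm` its triangle
inequalities for free. -/
def truncLp (τ : ℕ) : (ℕ → ι → ℝ) →ₗ[ℝ] EuclideanSpace ℝ (Fin (τ + 1) × ι) where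
  toFun u := WithLp.toLp 2 fun p => u p.1 p.2
  map_add' _ _ := rfl
  map_smul' _ _ := rfl

lemma truncLp_apply (τ : ℕ) (u : ℕ → ι → ℝ) :
    truncLp ι τ u = WithLp.toLp 2 fun p => u p.1 p.2 := rfl

variable [Fintype ι]

def truncNorm (u : ℕ → ι → ℝ) (τ : ℕ) : ℝ := ‖truncLp ι τ u‖

lemma truncNorm_nonneg (u : ℕ → ι → ℝ) (τ : ℕ) : 0 ≤ truncNorm u τ := norm_nonneg _

lemma sq_truncNorm (u : ℕ → ι → ℝ) (τ : ℕ) : truncNorm u τ ^ 2 = trNormSq u τ := by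
  rw [truncNorm, EuclideanSpace.norm_sq_eq, trNormSq, Fintype.sum_prod_type,
    ← Fin.sum_univ_eq_sum_range (fun k => ∑ i, u k i ^ 2)]
  simp [truncLp_apply]

lemma truncNorm_eq_sqrt (u : ℕ → ι → ℝ) (τ : ℕ) : truncNorm u τ = √(trNormSq u τ) := by
  rw [← sq_truncNorm, Real.sqrt_sq (truncNorm_nonneg u τ)]

lemma truncNorm_add_le (u v : ℕ → ι → ℝ) (τ : ℕ) :
    truncNorm (u + v) τ ≤ truncNorm u τ + truncNorm v τ := by
  simpa only [truncNorm, map_add] using norm_add_le _ _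

lemma truncNorm_sum_le {α : Type*} (s : Finset α) (u : α → ℕ → ι → ℝ) (τ : ℕ) :
    truncNorm (∑ a ∈ s, u a) τ ≤ ∑ a ∈ s, truncNorm (u a) τ := by
  simpa only [truncNorm, map_sum] using norm_sum_le _ _

lemma truncNorm_congr {u v : ℕ → ι → ℝ} {τ : ℕ} (h : ∀ k ≤ τ, u k = v k) :
    truncNorm u τ = truncNorm v τ := by
  rw [truncNorm, truncNorm, truncLp_apply, truncLp_apply]
  congr 2
  funext p
  rw [h p.1 (Nat.lt_succ_iff.mp p.1.isLt)]

lemma truncNorm_le_of_abs_le {u v : ℕ → ι → ℝ} {τ : ℕ} (h : ∀ k i, |u k i| ≤ |v k i|) :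
    truncNorm u τ ≤ truncNorm v τ := by
  rw [truncNorm_eq_sqrt, truncNorm_eq_sqrt, trNormSq, trNormSq]
  exact Real.sqrt_le_sqrt <| sum_le_sum fun k _ => sum_le_sum fun i _ => sq_le_sq.mpr (h k i)

def delay (d : ℕ) (u : ℕ → ι → ℝ) (k : ℕ) : ι → ℝ := if d ≤ k then u (k - d) else 0

lemma truncNorm_delay_le (d : ℕ) (u : ℕ → ι → ℝ) (τ : ℕ) :
    truncNorm (delay d u) τ ≤ truncNorm u τ := by
  rw [truncNorm_eq_sqrt, truncNorm_eq_sqrt]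
  gcongr
  have hsq : ∀ k, ∑ i, delay d u k i ^ 2 = if d ≤ k then ∑ i, u (k - d) i ^ 2 else 0 := by
    intro k
    unfold delay
    split_ifs <;> simp
  have hwindow : (range (τ + 1)).filter (d ≤ ·) = Ico d (τ + 1) := by
    ext k
    simp only [mem_filter, mem_range, mem_Ico]
    omega
  simp only [trNormSq, hsq]
  rw [← sum_filter, hwindow, sum_Ico_eq_sum_range]
  simp only [Nat.add_sub_cancel_left]
  exact sum_le_sum_of_subset_of_nonneg (range_subset_range.2 (by omega))
    fun _ _ _ => by positivity

section Frobenius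

attribute [local instance] Matrix.frobeniusNormedAddCommGroup Matrix.frobeniusNormedSpace

lemma sum_sq_mulVec_le {κ : Type*} [Fintype κ] (M : Matrix κ ι ℝ) (x : ι → ℝ) :
    ∑ i, (M *ᵥ x) i ^ 2 ≤ ‖M‖ ^ 2 * ∑ j, x j ^ 2 := by
  have h : ‖WithLp.toLp 2 (M *ᵥ x)‖ ≤ ‖M‖ * ‖WithLp.toLp 2 x‖ := by
    rw [← Matrix.frobenius_norm_replicateCol (ι := Unit),
      ← Matrix.frobenius_norm_replicateCol (ι := Unit), Matrix.replicateCol_mulVec]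
    exact Matrix.frobenius_norm_mul _ _
  have h2 := pow_le_pow_left₀ (norm_nonneg _) h 2
  simpa [mul_pow, EuclideanSpace.norm_sq_eq] using h2

lemma truncNorm_mulVec_le {κ : Type*} [Fintype κ] (M : Matrix κ ι ℝ) (u : ℕ → ι → ℝ) (τ : ℕ) :
    truncNorm (fun k => M *ᵥ u k) τ ≤ ‖M‖ * truncNorm u τ := by
  rw [truncNorm_eq_sqrt, truncNorm_eq_sqrt, ← Real.sqrt_sq (norm_nonneg M),
    ← Real.sqrt_mul (sq_nonneg _), trNormSq, trNormSq, mul_sum]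
  gcongr with k _
  exact sum_sq_mulVec_le M (u k)

end Frobenius

lemma sigNorm_nonneg (u : ℕ → ι → ℝ) : 0 ≤ sigNorm u := Real.sqrt_nonneg _

lemma truncNorm_le_sigNorm {u : ℕ → ι → ℝ} (hu : Summable fun k => ∑ i, u k i ^ 2) (τ : ℕ) :
    truncNorm u τ ≤ sigNorm u := by
  rw [truncNorm_eq_sqrt, sigNorm]
  exact Real.sqrt_le_sqrt <| hu.sum_le_tsum _ fun k _ => sum_nonneg fun i _ => sq_nonneg _

lemma sum_range_sum_sq_le_of_forall_truncNorm_le {u : ℕ → ι → ℝ} {M : ℝ}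
    (h : ∀ τ, truncNorm u τ ≤ M) (N : ℕ) : ∑ k ∈ range N, ∑ i, u k i ^ 2 ≤ M ^ 2 := by
  cases N with
  | zero => simpa using sq_nonneg M
  | succ τ =>
    exact (sq_truncNorm u τ).symm.trans_le (pow_le_pow_left₀ (truncNorm_nonneg u τ) (h τ) 2)

lemma sigNorm_le_of_forall_truncNorm_le {u : ℕ → ι → ℝ} {M : ℝ} (hM : 0 ≤ M)
    (h : ∀ τ, truncNorm u τ ≤ M) : sigNorm u ≤ M := by
  rw [sigNorm, Real.sqrt_le_left hM]
  exact Real.tsum_le_of_sum_range_le (fun _ => sum_nonneg fun _ _ => sq_nonneg _)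
    (sum_range_sum_sq_le_of_forall_truncNorm_le h)

lemma summable_of_forall_truncNorm_le {u : ℕ → ι → ℝ} {M : ℝ} (h : ∀ τ, truncNorm u τ ≤ M) :
    Summable fun k => ∑ i, u k i ^ 2 :=
  summable_of_sum_range_le (fun _ => sum_nonneg fun _ _ => sq_nonneg _)
    (sum_range_sum_sq_le_of_forall_truncNorm_le h)

lemma sigNorm_smul (a : ℝ) (u : ℕ → ι → ℝ) : sigNorm (a • u) = |a| * sigNorm u := by
  simp only [sigNorm, Pi.smul_apply, smul_eq_mul, mul_pow, ← mul_sum, tsum_mul_left]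
  rw [Real.sqrt_mul (sq_nonneg a), Real.sqrt_sq_eq_abs]

def truncate (u : ℕ → ι → ℝ) (τ : ℕ) (k : ℕ) : ι → ℝ := if k ≤ τ then u k else 0

lemma sum_sq_truncate (u : ℕ → ι → ℝ) (τ : ℕ) :
    (fun k => ∑ i, truncate u τ k i ^ 2)
      = fun k => if k ∈ range (τ + 1) then ∑ i, u k i ^ 2 else 0 := by
  funext k
  simp only [truncate, mem_range, Nat.lt_succ_iff]
  split_ifs <;> simp

lemma summable_truncate (u : ℕ → ι → ℝ) (τ : ℕ) :
    Summable fun k => ∑ i, truncate u τ k i ^ 2 := by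
  rw [sum_sq_truncate]
  exact summable_of_ne_finset_zero fun k hk => if_neg hk

lemma sigNorm_truncate (u : ℕ → ι → ℝ) (τ : ℕ) : sigNorm (truncate u τ) = truncNorm u τ := by
  rw [sigNorm, sum_sq_truncate, tsum_eq_sum fun k hk => if_neg hk, truncNorm_eq_sqrt, trNormSq]
  exact congrArg _ (sum_congr rfl fun k hk => if_pos hk)

end TruncatedNorm

theorem summable_norm_pow_of_spectralRadius_lt_one {𝔸 : Type*} [NormedRing 𝔸]
    [NormedAlgebra ℂ 𝔸] [CompleteSpace 𝔸] {a : 𝔸} (h : spectralRadius ℂ a < 1) :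
    Summable fun k => ‖a ^ k‖ := by
  obtain ⟨r, hρr, hr1⟩ := ENNReal.lt_iff_exists_nnreal_btwn.1 h
  have hev : ∀ᶠ k : ℕ in Filter.atTop, ENNReal.ofReal (‖a ^ k‖ ^ (1 / k : ℝ)) < r :=
    (spectrum.pow_norm_pow_one_div_tendsto_nhds_spectralRadius a).eventually_lt_const hρr
  refine (summable_geometric_of_lt_one r.2 (by exact_mod_cast hr1)).of_norm_bounded_eventually_nat
    ?_
  filter_upwards [hev, Filter.eventually_ge_atTop 1] with k hk hk1
  rw [← ENNReal.ofReal_coe_nnreal, ENNReal.ofReal_lt_ofReal_iff_of_nonneg (by positivity),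
    one_div] at hk
  rw [norm_norm, ← Real.rpow_inv_natCast_pow (norm_nonneg (a ^ k)) (Nat.one_le_iff_ne_zero.mp hk1)]
  exact pow_le_pow_left₀ (by positivity) hk.le k

section Frobenius

attribute [local instance] Matrix.frobeniusNormedAddCommGroup Matrix.frobeniusNormedSpace
  Matrix.frobeniusNormedRing Matrix.frobeniusNormedAlgebra

theorem SchurStable.summable_norm_pow {n : Type*} [Fintype n] [DecidableEq n]
    {Λ : Matrix n n ℝ} (h : SchurStable Λ) : Summable fun k => ‖Λ ^ k‖ := by
  refine (summable_norm_pow_of_spectralRadius_lt_one h).congr fun k => ?_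
  rw [← RingHom.mapMatrix_apply, ← map_pow, RingHom.mapMatrix_apply]
  exact Matrix.frobenius_norm_map_eq _ _ fun x => by simp

end Frobenius

section LTI

open Finset

variable {n p q : Type*} [Fintype n] [Fintype p] [Fintype q]
  (A : Matrix n n ℝ) (B : Matrix n p ℝ) (C : Matrix q n ℝ) (D : Matrix q p ℝ)

lemma ltiState_congr {u v : ℕ → p → ℝ} {k : ℕ} (h : ∀ j < k, u j = v j) :
    ltiState A B u k = ltiState A B v k := by
  induction k with
  | zero => rfl
  | succ k ih => rw [ltiState, ltiState, ih fun j hj => h j (by omega), h k (by omega)]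

lemma ltiOutput_congr {u v : ℕ → p → ℝ} {k : ℕ} (h : ∀ j ≤ k, u j = v j) :
    ltiOutput A B C D u k = ltiOutput A B C D v k := by
  rw [ltiOutput, ltiOutput, ltiState_congr A B fun j hj => h j hj.le, h k le_rfl]

lemma ltiState_smul (a : ℝ) (u : ℕ → p → ℝ) (k : ℕ) :
    ltiState A B (a • u) k = a • ltiState A B u k := by
  induction k with
  | zero => simp [ltiState]
  | succ k ih =>
    rw [ltiState, ltiState, ih, Pi.smul_apply, Matrix.mulVec_smul, Matrix.mulVec_smul, smul_add]

lemma ltiOutput_smul (a : ℝ) (u : ℕ → p → ℝ) :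
    ltiOutput A B C D (a • u) = a • ltiOutput A B C D u := by
  funext k
  simp only [ltiOutput, ltiState_smul, Pi.smul_apply, Matrix.mulVec_smul, smul_add]

variable [DecidableEq n]

lemma ltiState_eq_sum (u : ℕ → p → ℝ) (k : ℕ) :
    ltiState A B u k = ∑ j ∈ range k, (A ^ j * B) *ᵥ u (k - (j + 1)) := by
  induction k with
  | zero => rfl
  | succ k ih =>
    rw [ltiState, ih, sum_range_succ', Matrix.mulVec_sum]
    simp only [Matrix.mulVec_mulVec, pow_succ', Matrix.mul_assoc, pow_zero, Matrix.one_mul,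
      Nat.add_sub_add_right, Nat.sub_zero]

lemma ltiState_eq_sum_delay (u : ℕ → p → ℝ) {k N : ℕ} (hk : k ≤ N) :
    ltiState A B u k = ∑ j ∈ range N, (A ^ j * B) *ᵥ delay (j + 1) u k := by
  rw [ltiState_eq_sum]
  refine sum_subset_zero_on_sdiff (range_subset_range.2 hk) (fun j hj => ?_) fun j hj => ?_
  · have : ¬ j + 1 ≤ k := by simp only [mem_sdiff, mem_range] at hj; omega
    rw [delay, if_neg this, Matrix.mulVec_zero]
  · have : j + 1 ≤ k := mem_range.1 hj
    rw [delay, if_pos this]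

section Frobenius

attribute [local instance] Matrix.frobeniusNormedAddCommGroup Matrix.frobeniusNormedSpace

lemma truncNorm_ltiOutput_le (hA : Summable fun j => ‖A ^ j‖) (u : ℕ → p → ℝ) (τ : ℕ) :
    truncNorm (ltiOutput A B C D u) τ
      ≤ (‖C‖ * (∑' j, ‖A ^ j‖) * ‖B‖ + ‖D‖) * truncNorm u τ := by
  set y : ℕ → ℕ → q → ℝ := fun j k => (C * (A ^ j * B)) *ᵥ delay (j + 1) u k
  have hsplit : ∀ k ≤ τ, ltiOutput A B C D u k
      = ((∑ j ∈ range (τ + 1), y j) + fun k => D *ᵥ u k) k := by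
    intro k hk
    simp only [ltiOutput, ltiState_eq_sum_delay A B u (Nat.le_succ_of_le hk), Matrix.mulVec_sum,
      Matrix.mulVec_mulVec, y, Pi.add_apply, Finset.sum_apply]
  have hy : ∀ j, truncNorm (y j) τ ≤ ‖C‖ * ‖A ^ j‖ * ‖B‖ * truncNorm u τ := by
    intro j
    refine (truncNorm_mulVec_le _ _ τ).trans (mul_le_mul ?_ (truncNorm_delay_le _ u τ)
      (truncNorm_nonneg _ _) (by positivity))
    calc ‖C * (A ^ j * B)‖ ≤ ‖C‖ * (‖A ^ j‖ * ‖B‖) :=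
          (Matrix.frobenius_norm_mul _ _).trans (by gcongr; exact Matrix.frobenius_norm_mul _ _)
      _ = ‖C‖ * ‖A ^ j‖ * ‖B‖ := by ring
  have hgeom : ∑ j ∈ range (τ + 1), ‖A ^ j‖ ≤ ∑' j, ‖A ^ j‖ :=
    hA.sum_le_tsum _ fun j _ => norm_nonneg _
  calc truncNorm (ltiOutput A B C D u) τ
      = truncNorm ((∑ j ∈ range (τ + 1), y j) + fun k => D *ᵥ u k) τ := truncNorm_congr hsplit
    _ ≤ ∑ j ∈ range (τ + 1), truncNorm (y j) τ + ‖D‖ * truncNorm u τ :=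
        (truncNorm_add_le _ _ τ).trans
          (add_le_add (truncNorm_sum_le _ _ τ) (truncNorm_mulVec_le D u τ))
    _ ≤ ∑ j ∈ range (τ + 1), ‖C‖ * ‖A ^ j‖ * ‖B‖ * truncNorm u τ + ‖D‖ * truncNorm u τ := by
        gcongr with j; exact hy j
    _ ≤ (‖C‖ * (∑' j, ‖A ^ j‖) * ‖B‖ + ‖D‖) * truncNorm u τ := by
        rw [← sum_mul, ← sum_mul, ← mul_sum, add_mul]
        gcongr
        exact truncNorm_nonneg u τ

theorem SchurStable.exists_truncNorm_ltiOutput_le (hA : SchurStable A) :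
    ∃ g, 0 ≤ g ∧ ∀ u τ, truncNorm (ltiOutput A B C D u) τ ≤ g * truncNorm u τ :=
  ⟨_, by positivity, truncNorm_ltiOutput_le A B C D (SchurStable.summable_norm_pow hA)⟩

end Frobenius

end LTI

section PositiveGain

variable {n p q : Type*} [Fintype n] [Fintype p] [Fintype q]
  {A : Matrix n n ℝ} {B : Matrix n p ℝ} {C : Matrix q n ℝ} {D : Matrix q p ℝ} {g : ℝ}

lemma posL2Gain_nonneg : 0 ≤ posL2Gain A B C D :=
  Real.sSup_nonneg fun _ ⟨_, _, _, _, h⟩ => h ▸ Real.sqrt_nonneg _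

variable (hg0 : 0 ≤ g) (hg : ∀ u τ, truncNorm (ltiOutput A B C D u) τ ≤ g * truncNorm u τ)
include hg0 hg

lemma truncNorm_ltiOutput_le_sigNorm {u : ℕ → p → ℝ} (hu : Summable fun k => ∑ i, u k i ^ 2)
    (τ : ℕ) : truncNorm (ltiOutput A B C D u) τ ≤ g * sigNorm u :=
  (hg u τ).trans (mul_le_mul_of_nonneg_left (truncNorm_le_sigNorm hu τ) hg0)

lemma sigNorm_ltiOutput_le_posL2Gain {w : ℕ → p → ℝ} (hw : ∀ k i, 0 ≤ w k i)
    (hsum : Summable fun k => ∑ i, w k i ^ 2) :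
    sigNorm (ltiOutput A B C D w) ≤ posL2Gain A B C D * sigNorm w := by
  rcases (sigNorm_nonneg w).eq_or_lt with h0 | hpos
  · simpa [← h0] using sigNorm_le_of_forall_truncNorm_le (mul_nonneg hg0 h0.le)
      (truncNorm_ltiOutput_le_sigNorm hg0 hg hsum)
  have hbdd : BddAbove {c : ℝ | ∃ ws : ℕ → p → ℝ, (∀ k i, 0 ≤ ws k i) ∧
      Summable (fun k => ∑ i, (ws k i) ^ 2) ∧ sigNorm ws = 1 ∧
      c = sigNorm (ltiOutput A B C D ws)} := by
    refine ⟨g, ?_⟩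
    rintro _ ⟨u, -, hu, hu1, rfl⟩
    have := sigNorm_le_of_forall_truncNorm_le (mul_nonneg hg0 (sigNorm_nonneg u))
      (truncNorm_ltiOutput_le_sigNorm hg0 hg hu)
    rwa [hu1, mul_one] at this
  have hle : sigNorm (ltiOutput A B C D ((sigNorm w)⁻¹ • w)) ≤ posL2Gain A B C D := by
    refine le_csSup hbdd ⟨(sigNorm w)⁻¹ • w, fun k i => ?_, ?_, ?_, rfl⟩
    · exact mul_nonneg (inv_nonneg.2 hpos.le) (hw k i)
    · exact (hsum.mul_left ((sigNorm w)⁻¹ ^ 2)).congr fun k => by simp [mul_pow, Finset.mul_sum]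
    · rw [sigNorm_smul, abs_of_pos (inv_pos.2 hpos), inv_mul_cancel₀ hpos.ne']
  rwa [ltiOutput_smul, sigNorm_smul, abs_of_pos (inv_pos.2 hpos), inv_mul_le_iff₀ hpos,
    mul_comm] at hle

lemma truncNorm_ltiOutput_le_posL2Gain {w : ℕ → p → ℝ} (hw : ∀ k i, 0 ≤ w k i) (τ : ℕ) :
    truncNorm (ltiOutput A B C D w) τ ≤ posL2Gain A B C D * truncNorm w τ := by
  have hcausal : ∀ k ≤ τ, ltiOutput A B C D w k = ltiOutput A B C D (truncate w τ) k :=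
    fun k hk => ltiOutput_congr A B C D fun j hj => by rw [truncate, if_pos (hj.trans hk)]
  have hsum := summable_truncate w τ
  calc truncNorm (ltiOutput A B C D w) τ = truncNorm (ltiOutput A B C D (truncate w τ)) τ :=
        truncNorm_congr hcausal
    _ ≤ sigNorm (ltiOutput A B C D (truncate w τ)) :=
        truncNorm_le_sigNorm (summable_of_forall_truncNorm_le
          (truncNorm_ltiOutput_le_sigNorm hg0 hg hsum)) τ
    _ ≤ posL2Gain A B C D * sigNorm (truncate w τ) :=
        sigNorm_ltiOutput_le_posL2Gain hg0 hg
          (fun k i => by unfold truncate; split_ifs <;> simp [hw]) hsum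
    _ = posL2Gain A B C D * truncNorm w τ := by rw [sigNorm_truncate]

end PositiveGain

lemma abs_relu_le {ι : Type*} (ξ : ι → ℝ) (i : ι) : |relu ξ i| ≤ |ξ i| := by
  rcases le_total (ξ i) 0 with h | h <;> simp [relu, h]

lemma rnnState_eq_add {n m : ℕ} (Λ : Matrix (Fin n) (Fin n) ℝ)
    (Win : Matrix (Fin n) (Fin m) ℝ) (Wout : Matrix (Fin m) (Fin n) ℝ)
    (s : ℕ → Fin m → ℝ) (v : ℕ → Fin n → ℝ) (k : ℕ) :
    rnnState Λ Win Wout s v k =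
      ltiState Λ Win (fun j => relu (Wout *ᵥ rnnState Λ Win Wout s v j + s j)) k
        + ltiState Λ 1 v k := by
  induction k with
  | zero => simp [rnnState, ltiState]
  | succ k ih =>
    rw [rnnState, ltiState, ltiState, ih, Matrix.mulVec_add, Matrix.one_mulVec]
    abel

lemma exists_small_gain {ρ g : ℝ} (hρ0 : 0 ≤ ρ) (hρ1 : ρ < 1) (hg : 0 ≤ g) :
    ∃ γ, 0 ≤ γ ∧ ∀ Z W S V : ℝ, 0 ≤ Z → 0 ≤ W → 0 ≤ S → 0 ≤ V →
      Z ≤ ρ * W + g * V → W ≤ Z + S → Z ^ 2 + W ^ 2 ≤ γ ^ 2 * (S ^ 2 + V ^ 2) := by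
  set K := (ρ + g) / (1 - ρ)
  have hK : 0 ≤ K := div_nonneg (by positivity) (by linarith)
  refine ⟨√(2 * (K ^ 2 + (K + 1) ^ 2)), Real.sqrt_nonneg _, ?_⟩
  intro Z W S V hZ hW hS hV hZW hWZ
  rw [Real.sq_sqrt (by positivity)]
  have hZK : Z ≤ K * (S + V) := by
    rw [div_mul_eq_mul_div, le_div_iff₀ (by linarith)]
    nlinarith [mul_le_mul_of_nonneg_left hWZ hρ0]
  have hWK : W ≤ (K + 1) * (S + V) := by linarith
  nlinarith [mul_le_mul hZK hZK hZ (by positivity), mul_le_mul hWK hWK hW (by positivity),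
    sq_nonneg (S - V), mul_nonneg hK hK]

/-- small-gain stability condition for the RNN with ReLU activation.
Here z(k) = W_out x(k) and w(k) = Φ(z(k) + s(k)). -/
theorem stmt_13 (n m : ℕ) (Λ : Matrix (Fin n) (Fin n) ℝ)
    (Win : Matrix (Fin n) (Fin m) ℝ) (Wout : Matrix (Fin m) (Fin n) ℝ)
    (hΛ : SchurStable Λ)
    (hgain : posL2Gain Λ Win Wout (0 : Matrix (Fin m) (Fin m) ℝ) < 1) :
    ∃ γ : ℝ, 0 ≤ γ ∧ ∀ (s : ℕ → Fin m → ℝ) (v : ℕ → Fin n → ℝ) (τ : ℕ),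
      trNormSq (fun k => Wout.mulVec (rnnState Λ Win Wout s v k)) τ
        + trNormSq (fun k => relu (Wout.mulVec (rnnState Λ Win Wout s v k) + s k)) τ
      ≤ γ ^ 2 * (trNormSq s τ + trNormSq v τ) := by
  obtain ⟨g₀, hg₀, hG₀⟩ := SchurStable.exists_truncNorm_ltiOutput_le Λ Win Wout 0 hΛ
  obtain ⟨g₁, hg₁, hG₁⟩ :=
    SchurStable.exists_truncNorm_ltiOutput_le Λ (1 : Matrix (Fin n) (Fin n) ℝ) Wout 0 hΛ
  obtain ⟨γ, hγ, hsmall⟩ := exists_small_gain posL2Gain_nonneg hgain hg₁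
  refine ⟨γ, hγ, fun s v τ => ?_⟩
  set z := fun k => Wout *ᵥ rnnState Λ Win Wout s v k
  set w := fun k => relu (z k + s k)
  have hz_split : z = ltiOutput Λ Win Wout 0 w + ltiOutput Λ 1 Wout 0 v := by
    funext k
    simp only [z, w, Pi.add_apply, ltiOutput, Matrix.zero_mulVec, add_zero, ← Matrix.mulVec_add,
      ← rnnState_eq_add]
  have hz : truncNorm z τ ≤ posL2Gain Λ Win Wout 0 * truncNorm w τ + g₁ * truncNorm v τ := by
    rw [hz_split]
    exact (truncNorm_add_le _ _ τ).trans (add_le_add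
      (truncNorm_ltiOutput_le_posL2Gain hg₀ hG₀ (fun k i => le_max_right _ _) τ) (hG₁ v τ))
  have hw : truncNorm w τ ≤ truncNorm z τ + truncNorm s τ :=
    (truncNorm_le_of_abs_le fun k => abs_relu_le _).trans (truncNorm_add_le z s τ)
  simpa only [sq_truncNorm] using hsmall _ _ _ _ (truncNorm_nonneg _ _) (truncNorm_nonneg _ _)
    (truncNorm_nonneg _ _) (truncNorm_nonneg _ _) hz hw

end
end
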